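/- Let δ := ω·(α - σ(α)), t := ε(1), and suppose s₀ ∈ K satisfies algebraMap K R (s₀) = δ·σ(δ). Then the following identity holds in the formal power series ring K[[x]]: (Σ_{p≥0} ε(δ^p)·x^p) · (1 - t·s₀·x + s₀·x²) = t + (2 - t²·s₀)·x. -/

import Mathlib

open Polynomial TensorProduct

noncomputable section

variable {K : Type*} [CommRing K]

/-- The quadratic `K`-algebra `K[X]/(X² - s·X + p)`. -/
abbrev Quad (s p : K) : Type _ := AdjoinRoot (X ^ 2 - C s * X + C p)

/-- The image of `X`, i.e. the generator `α`. -/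
def qα (s p : K) : Quad s p := AdjoinRoot.root _

lemma quad_aeval_root (s p : K) :
    (aeval (qα s p)) (X ^ 2 - C s * X + C p) = 0 := by
  simp [qα, AdjoinRoot.aeval_eq, AdjoinRoot.mk_self]

/-- The involution `σ` of the quadratic algebra, with `σ α = s - α`. -/
def qσ (s p : K) : Quad s p →ₐ[K] Quad s p :=
  AdjoinRoot.liftAlgHom _ (Algebra.ofId K (Quad s p)) (algebraMap K (Quad s p) s - qα s p) (by
    change aeval (algebraMap K (Quad s p) s - qα s p) (X ^ 2 - C s * X + C p) = 0
    have h := quad_aeval_root s p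
    simp only [map_add, map_sub, map_mul, map_pow, aeval_X, aeval_C] at h ⊢
    linear_combination h)

/-! With `d = α - σ α` and `δ = ω d`, the functional `r ↦ ε (ω r)` is the `α`-coordinate, so
`r - σ r = ε (ω r) • d`; at `r = ω⁻¹` this reads `t • d = ω⁻¹ - σ ω⁻¹`. Together with `σ d = -d`
it turns the trace `δ + σ δ` into `t • δ σ δ = t s₀`. Hence `δ² = t s₀ δ - s₀`, so `ε (δⁿ)` obeys
the recurrence with characteristic polynomial `1 - t s₀ x + s₀ x²`, and the initial values
`ε 1 = t`, `ε δ = 2` give the numerator. -/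

theorem PowerSeries.mk_mul_eq_of_linear_recurrence {R : Type*} [CommRing R] (a : ℕ → R)
    (c e : R) (h : ∀ n, a (n + 2) = c * a (n + 1) - e * a n) :
    PowerSeries.mk a * (1 - PowerSeries.C c * PowerSeries.X + PowerSeries.C e * PowerSeries.X ^ 2)
      = PowerSeries.C (a 0) + PowerSeries.C (a 1 - c * a 0) * PowerSeries.X := by
  have hexpand : PowerSeries.mk a * (1 - PowerSeries.C c * PowerSeries.X
      + PowerSeries.C e * PowerSeries.X ^ 2) = PowerSeries.mk a
        - PowerSeries.C c * (PowerSeries.X * PowerSeries.mk a)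
        + PowerSeries.C e * (PowerSeries.X ^ 2 * PowerSeries.mk a) := by ring
  rw [hexpand]
  ext (_ | _ | n)
  · simp
  · simp [PowerSeries.coeff_X_pow_mul']
  · simp [PowerSeries.coeff_X_pow_mul', h]

theorem add_map_eq_mul_mul_map {R : Type*} [CommRing R] (σ : R →+* R) (ω : Rˣ) (d t : R)
    (hd : σ d = -d) (ht : t * d = ↑ω⁻¹ - σ ↑ω⁻¹) :
    ω * d + σ (ω * d) = t * (ω * d * σ (ω * d)) := by
  have hσω : σ ω * σ ↑ω⁻¹ = 1 := by rw [← map_mul, Units.mul_inv, map_one]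
  rw [map_mul, hd]
  linear_combination (ω * σ ω * d) * ht + σ ω * d * ω.mul_inv - ω * d * hσω

section Quad

variable (s p : K)

theorem qσ_qα : qσ s p (qα s p) = algebraMap K (Quad s p) s - qα s p :=
  AdjoinRoot.liftAlgHom_root _ _ _ _

theorem qσ_qα_sub_qσ_qα :
    qσ s p (qα s p - qσ s p (qα s p)) = -(qα s p - qσ s p (qα s p)) := by
  rw [qσ_qα, map_sub, map_sub, AlgHom.commutes, qσ_qα]
  ring

theorem qα_mul_qα :
    qα s p * qα s p = algebraMap K (Quad s p) s * qα s p - algebraMap K (Quad s p) p := by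
  have h := quad_aeval_root s p
  simp only [map_add, map_sub, map_mul, map_pow, aeval_X, aeval_C] at h
  linear_combination h

theorem exists_eq_algebraMap_add_algebraMap_mul_qα (r : Quad s p) :
    ∃ a b : K, r = algebraMap K (Quad s p) a + algebraMap K (Quad s p) b * qα s p := by
  induction r using AdjoinRoot.induction_on with | ih f => ?_
  induction f using Polynomial.induction_on with
  | C a => exact ⟨a, 0, by simp⟩
  | add f g hf hg =>
    obtain ⟨a, b, hab⟩ := hf
    obtain ⟨a', b', hab'⟩ := hg
    exact ⟨a + a', b + b', by rw [map_add, hab, hab', map_add, map_add]; ring⟩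
  | monomial n a ih =>
    obtain ⟨a', b', hab⟩ := ih
    refine ⟨-(b' * p), a' + b' * s, ?_⟩
    rw [pow_succ (X : K[X]) n, ← mul_assoc, map_mul, hab, AdjoinRoot.mk_X, ← qα]
    simp only [map_add, map_neg, map_mul]
    linear_combination algebraMap K (Quad s p) b' * qα_mul_qα s p

variable {s p}

theorem sub_qσ_eq_algebraMap_mul (w : Quad s p) (ε : Quad s p →ₗ[K] K) (hw : ε w = 0)
    (hwα : ε (w * qα s p) = 1) (r : Quad s p) :
    r - qσ s p r = algebraMap K (Quad s p) (ε (w * r)) * (qα s p - qσ s p (qα s p)) := by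
  obtain ⟨a, b, rfl⟩ := exists_eq_algebraMap_add_algebraMap_mul_qα s p r
  have hεb : ε (w * (algebraMap K (Quad s p) a + algebraMap K (Quad s p) b * qα s p)) = b := by
    rw [show w * (algebraMap K (Quad s p) a + algebraMap K (Quad s p) b * qα s p)
        = a • w + b • (w * qα s p) by simp only [Algebra.smul_def]; ring]
    simp [hw, hwα]
  rw [hεb, map_add, map_mul, AlgHom.commutes, AlgHom.commutes]
  ring

end Quad

/-- With `δ = ω·(α - σ α)`, `t = ε 1`, and `s₀ ∈ K` such that `s₀·1 = δ·σ(δ)`,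
the power series identity
`(Σ_p ε(δ^p) x^p)·(1 - t·s₀·x + s₀·x²) = t + (2 - t²·s₀)·x` holds in `K[[x]]`. -/
theorem stmt8 (s p : K) (ω : (Quad s p)ˣ) (ε : Quad s p →ₗ[K] K)
    (hω : ε (ω : Quad s p) = 0) (hωα : ε ((ω : Quad s p) * qα s p) = 1)
    (s₀ : K)
    (hs₀ : algebraMap K (Quad s p) s₀
      = (ω : Quad s p) * (qα s p - qσ s p (qα s p)) *
          qσ s p ((ω : Quad s p) * (qα s p - qσ s p (qα s p)))) :
    (PowerSeries.mk fun n : ℕ =>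
        ε (((ω : Quad s p) * (qα s p - qσ s p (qα s p))) ^ n)) *
      (1 - PowerSeries.C (ε 1 * s₀) * PowerSeries.X
         + PowerSeries.C s₀ * PowerSeries.X ^ 2)
    = PowerSeries.C (ε 1)
        + PowerSeries.C (2 - (ε 1) ^ 2 * s₀) * PowerSeries.X := by
  set d := qα s p - qσ s p (qα s p)
  set δ := (ω : Quad s p) * d
  have htrace : δ + qσ s p δ = algebraMap K (Quad s p) (ε 1 * s₀) := by
    have htd := sub_qσ_eq_algebraMap_mul _ ε hω hωα ↑ω⁻¹
    rw [ω.mul_inv] at htd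
    rw [(algebraMap K (Quad s p)).map_mul, hs₀]
    exact add_map_eq_mul_mul_map (qσ s p).toRingHom ω d _ (qσ_qα_sub_qσ_qα s p) htd.symm
  have hrec (n : ℕ) : ε (δ ^ (n + 2)) = ε 1 * s₀ * ε (δ ^ (n + 1)) - s₀ * ε (δ ^ n) := by
    rw [show δ ^ (n + 2) = (δ + qσ s p δ) * δ ^ (n + 1) - δ * qσ s p δ * δ ^ n by ring,
      htrace, ← hs₀, ← Algebra.smul_def, ← Algebra.smul_def, map_sub, map_smul, map_smul,
      smul_eq_mul, smul_eq_mul]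
  have hεδ : ε δ = 2 := by
    rw [show δ = (2 : K) • ((ω : Quad s p) * qα s p) - s • (ω : Quad s p) by
      simp only [δ, d, qσ_qα, Algebra.smul_def, map_ofNat]; ring]
    simp [hω, hωα]
  rw [PowerSeries.mk_mul_eq_of_linear_recurrence _ _ _ hrec, pow_zero, pow_one, hεδ]
  ring_nf

end
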